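/- arXiv:1705.04507 — 2 statements merged into one kernel-verified Lean document; each statement's English description precedes it below -/
import Mathlib

section
/- Let m ≥ 1 and let q : F_2^{2m} → F_2 be the quadratic bent function q(x) = ∑_{k<m} x_k x_{m+k}. For b, c, b', c' ∈ F_2^{2m} define f(x) := q(x+b) + ⟨c,x⟩ + q(b) and g(x) := q(x+b') + ⟨c',x⟩ + q(b'). Then f(0) = g(0) = 0, and the Cayley graphs Cay(f) and Cay(g) are isomorphic if and only if wt(f) = wt(g). In other words, the extended translation class of q contains exactly two extended Cayley equivalence classes, corresponding to the two possible weight classes. -/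
open Finset

/-- Inner product on `F_2^n`. -/
def dotp {n : ℕ} (x y : Fin n → ZMod 2) : ZMod 2 := ∑ i, x i * y i

/-- Hamming weight of a Boolean function: the cardinality of its support. -/
def wt {n : ℕ} (f : (Fin n → ZMod 2) → ZMod 2) : ℕ :=
  (Finset.univ.filter fun x => f x = 1).card

/-- Walsh–Hadamard transform of a Boolean function. -/
def walsh {n : ℕ} (f : (Fin n → ZMod 2) → ZMod 2) (x : Fin n → ZMod 2) : ℤ :=
  ∑ y : Fin n → ZMod 2, (-1 : ℤ) ^ (f y + dotp x y).val

/-- A Boolean function on `F_2^(2m)` is bent if its Walsh–Hadamard transform has constant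
absolute value `2^m`. -/
def IsBent {m : ℕ} (f : (Fin (2 * m) → ZMod 2) → ZMod 2) : Prop :=
  ∀ x, |walsh f x| = 2 ^ m

/-- The dual of a bent function: `f̂ x = 0` if `W_f x = 2^m`, and `1` otherwise
(for bent `f` the other case is exactly `W_f x = -2^m`). -/
def dual {m : ℕ} (f : (Fin (2 * m) → ZMod 2) → ZMod 2) :
    (Fin (2 * m) → ZMod 2) → ZMod 2 :=
  fun x => if walsh f x = 2 ^ m then 0 else 1

/-- The weight class of a bent function on `F_2^(2m)`:
`0` if its weight is `2^(2m-1) - 2^(m-1)`, and `1` otherwise. -/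
def wc {m : ℕ} (f : (Fin (2 * m) → ZMod 2) → ZMod 2) : ZMod 2 :=
  if wt f = 2 ^ (2 * m - 1) - 2 ^ (m - 1) then 0 else 1

/-- The Cayley graph of a Boolean function: distinct `x`, `y` are adjacent iff `f (x+y) = 1`. -/
def cayley {n : ℕ} (f : (Fin n → ZMod 2) → ZMod 2) : SimpleGraph (Fin n → ZMod 2) where
  Adj x y := x ≠ y ∧ f (x + y) = 1
  symm := ⟨fun x y h => ⟨h.1.symm, by rw [add_comm]; exact h.2⟩⟩
  loopless := ⟨fun x h => h.1 rfl⟩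

instance cayleyAdjDecidable {n : ℕ} (f : (Fin n → ZMod 2) → ZMod 2) :
    DecidableRel (cayley f).Adj :=
  fun x y => inferInstanceAs (Decidable (x ≠ y ∧ f (x + y) = 1))

/-- The standard quadratic bent function `q x = ∑_{k<m} x_k x_{m+k}` on `F_2^(2m)`. -/
def quadq {m : ℕ} (x : Fin (2 * m) → ZMod 2) : ZMod 2 :=
  ∑ k : Fin m, x ⟨k.1, by have := k.isLt; omega⟩ * x ⟨m + k.1, by have := k.isLt; omega⟩

/-! Adding the linear term `⟨c, x⟩` to a translate of `q` gives again a translate: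
`q (x + b) + ⟨c, x⟩ + q b = q (x + s) + q s` with `s = b + J c`, where `J` swaps the two halves
of the coordinates, because `⟨c, x⟩` is the polar form of `q` evaluated at `(x, J c)`.
The Cayley graph of such an `f` is `wt f`-regular, so isomorphic Cayley graphs force equal
weights. Conversely, `wt f = #{y | q y = q s + 1}`, and the two level sets of `q` have different
sizes since `∑ₓ (-1)^(q x) = 2^m`; so equal weights force `q s = q s'`, and then the
transvection `τ z = z + B(z, d) d` along `d = s + s'` (with `B` the polar form of `q`) is a linear
automorphism with `q (τ z + s') = q (z + s)`, hence an isomorphism of the Cayley graphs. -/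

open QuadraticMap

lemma add_self_eq_zero_of_zmod_two {M : Type*} [AddCommGroup M] [Module (ZMod 2) M] (x : M) :
    x + x = 0 := by
  rw [← two_smul (ZMod 2), show (2 : ZMod 2) = 0 from rfl, zero_smul]

lemma AddChar.map_finset_sum {ι A M : Type*} [AddCommMonoid A] [CommMonoid M] (ψ : AddChar A M)
    (s : Finset ι) (f : ι → A) : ψ (∑ i ∈ s, f i) = ∏ i ∈ s, ψ (f i) := by
  induction s using Finset.cons_induction <;> simp [AddChar.map_add_eq_mul, *]

def signChar : AddChar (ZMod 2) ℤ where
  toFun a := (-1) ^ a.val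
  map_zero_eq_one' := rfl
  map_add_eq_mul' := by decide

section BooleanFunction

variable {n : ℕ}

lemma wt_translate (f : (Fin n → ZMod 2) → ZMod 2) (s : Fin n → ZMod 2) (a : ZMod 2) :
    wt (fun x => f (x + s) + a) = wt (fun x => f x + a) :=
  card_equiv (Equiv.addRight s) fun x => by simp

lemma sum_signChar_eq_wt_sub_wt (f : (Fin n → ZMod 2) → ZMod 2) :
    ∑ x, signChar (f x) = (wt (fun x => f x + 1) : ℤ) - wt f := by
  have h (a : ZMod 2) :
      signChar a = (if a + 1 = 1 then 1 else 0) - (if a = 1 then 1 else 0) := by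
    revert a
    decide
  simp only [h, sum_sub_distrib, sum_boole, wt]

lemma cayley_degree {f : (Fin n → ZMod 2) → ZMod 2} (hf : f 0 = 0) (v : Fin n → ZMod 2) :
    (cayley f).degree v = wt f := by
  rw [← SimpleGraph.card_neighborFinset_eq_degree]
  refine card_equiv (Equiv.addLeft v) fun y => ?_
  rw [SimpleGraph.mem_neighborFinset, mem_filter_univ, Equiv.coe_addLeft]
  refine ⟨And.right, fun hy => ⟨?_, hy⟩⟩
  rintro rfl
  simp [add_self_eq_zero_of_zmod_two, hf] at hy

lemma wt_eq_of_cayley_iso {f g : (Fin n → ZMod 2) → ZMod 2} (hf : f 0 = 0) (hg : g 0 = 0)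
    (φ : cayley f ≃g cayley g) : wt f = wt g := by
  rw [← cayley_degree hf 0, ← cayley_degree hg (φ 0), φ.degree_eq]

def cayleyIsoOfAddEquiv {f g : (Fin n → ZMod 2) → ZMod 2}
    (A : (Fin n → ZMod 2) ≃+ (Fin n → ZMod 2)) (h : ∀ x, g (A x) = f x) :
    cayley f ≃g cayley g where
  toEquiv := A.toEquiv
  map_rel_iff' {x y} := by
    simp only [cayley, AddEquiv.toEquiv_eq_coe, EquivLike.coe_coe, ne_eq,
      EmbeddingLike.apply_eq_iff_eq, ← map_add, h]

end BooleanFunction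

section Transvection

variable {M : Type*} [AddCommGroup M] [Module (ZMod 2) M] (Q : QuadraticForm (ZMod 2) M)

lemma polar_self_zmod_two (d : M) : polar Q d d = 0 := by
  rw [polar_self, nsmul_eq_mul, Nat.cast_two, show (2 : ZMod 2) = 0 from rfl, zero_mul]

lemma polar_add_polar_smul_self (d x : M) : polar Q (x + polar Q x d • d) d = polar Q x d := by
  rw [polar_add_left, polar_smul_left, polar_self_zmod_two, smul_zero, add_zero]

def transvection (d : M) : M ≃+ M where
  toFun x := x + polar Q x d • d
  invFun x := x + polar Q x d • d
  left_inv x := by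
    simp only [polar_add_polar_smul_self, add_assoc, add_self_eq_zero_of_zmod_two, add_zero]
  right_inv x := by
    simp only [polar_add_polar_smul_self, add_assoc, add_self_eq_zero_of_zmod_two, add_zero]
  map_add' x y := by
    simp only [polar_add_left, add_smul]
    abel

lemma transvection_apply (d x : M) : transvection Q d x = x + polar Q x d • d := rfl

lemma map_transvection_add {s s' : M} (h : Q s = Q s') (z : M) :
    Q (transvection Q (s + s') z + s') = Q (z + s) := by
  set d := s + s'
  have hs' : s' = s + d := by rw [← add_assoc, add_self_eq_zero_of_zmod_two, zero_add]
  have hpolar : polar Q s d = Q d := by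
    have := QuadraticMap.map_add Q s d
    rw [← hs', ← h] at this
    linear_combination -this - Q d * CharTwo.two_eq_zero (R := ZMod 2)
  obtain hz | hz : polar Q z d = 0 ∨ polar Q z d = 1 := by
    generalize polar Q z d = c
    revert c
    decide
  · calc Q (transvection Q d z + s') = Q (z + s + d) := by
          rw [transvection_apply, hz, zero_smul, add_zero, hs', add_assoc]
      _ = Q (z + s) + Q d + (polar Q z d + polar Q s d) := by
          rw [QuadraticMap.map_add Q, polar_add_left]
      _ = Q (z + s) := by
          rw [hz, hpolar, zero_add, add_assoc, CharTwo.add_self_eq_zero, add_zero]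
  · rw [transvection_apply, hz, one_smul, hs', show z + d + (s + d) = z + s + (d + d) by abel,
      add_self_eq_zero_of_zmod_two, add_zero]

def cayleyIsoOfMapEq {n : ℕ} (Q : QuadraticForm (ZMod 2) (Fin n → ZMod 2))
    {s s' : Fin n → ZMod 2} (h : Q s = Q s') :
    cayley (fun x => Q (x + s) + Q s) ≃g cayley (fun x => Q (x + s') + Q s') :=
  cayleyIsoOfAddEquiv (transvection Q (s + s')) fun z => by rw [map_transvection_add Q h, h]

end Transvection

section StandardQuadratic

variable {m : ℕ}

def halves (R : Type*) [Semiring R] (m : ℕ) :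
    (Fin (2 * m) → R) ≃ₗ[R] (Fin m → R) × (Fin m → R) :=
  LinearEquiv.funCongrLeft R R (finSumFinEquiv.trans (finCongr (two_mul m).symm)) ≪≫ₗ
    LinearEquiv.sumArrowLequivProdArrow (Fin m) (Fin m) R R

@[simp]
lemma halves_apply_fst {R : Type*} [Semiring R] (x : Fin (2 * m) → R) (k : Fin m) :
    (halves R m x).1 k = x ⟨k, by omega⟩ := by
  simp only [halves, LinearEquiv.trans_apply, LinearEquiv.sumArrowLequivProdArrow_apply_fst,
    LinearEquiv.funCongrLeft_apply]
  rfl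

@[simp]
lemma halves_apply_snd {R : Type*} [Semiring R] (x : Fin (2 * m) → R) (k : Fin m) :
    (halves R m x).2 k = x ⟨m + k, by omega⟩ := by
  simp only [halves, LinearEquiv.trans_apply, LinearEquiv.sumArrowLequivProdArrow_apply_snd,
    LinearEquiv.funCongrLeft_apply]
  exact congrArg x (Fin.ext (by simp [add_comm]))

lemma quadq_eq_dotProduct (x : Fin (2 * m) → ZMod 2) :
    quadq x = (halves (ZMod 2) m x).1 ⬝ᵥ (halves (ZMod 2) m x).2 := by
  simp [quadq, dotProduct]

lemma dotp_eq_dotProduct (c x : Fin (2 * m) → ZMod 2) :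
    dotp c x = (halves (ZMod 2) m c).1 ⬝ᵥ (halves (ZMod 2) m x).1 +
      (halves (ZMod 2) m c).2 ⬝ᵥ (halves (ZMod 2) m x).2 := by
  rw [dotp, ← (finCongr (two_mul m).symm).sum_comp, Fin.sum_univ_add]
  rfl

def quadForm (m : ℕ) : QuadraticForm (ZMod 2) (Fin (2 * m) → ZMod 2) :=
  LinearMap.BilinMap.toQuadraticMap <| (dotProductBilin (ZMod 2) (ZMod 2)).compl₁₂
    (LinearMap.fst _ _ _ ∘ₗ (halves (ZMod 2) m).toLinearMap)
    (LinearMap.snd _ _ _ ∘ₗ (halves (ZMod 2) m).toLinearMap)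

lemma coe_quadForm : ⇑(quadForm m) = quadq := by
  ext x
  rw [quadq_eq_dotProduct]
  rfl

def halfSwap (c : Fin (2 * m) → ZMod 2) : Fin (2 * m) → ZMod 2 :=
  (halves (ZMod 2) m).symm (halves (ZMod 2) m c).swap

lemma polar_quadForm_halfSwap (x c : Fin (2 * m) → ZMod 2) :
    polar (quadForm m) x (halfSwap c) = dotp c x := by
  rw [quadForm, LinearMap.BilinMap.polar_toQuadraticMap, dotp_eq_dotProduct]
  simp [halfSwap, dotProduct_comm]

lemma quadq_translate_add_dotp (b c : Fin (2 * m) → ZMod 2) :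
    (fun x => quadq (x + b) + dotp c x + quadq b) =
      fun x => quadForm m (x + (b + halfSwap c)) + quadForm m (b + halfSwap c) := by
  ext x
  rw [← coe_quadForm, ← polar_quadForm_halfSwap x c, QuadraticMap.map_add (quadForm m) x b,
    QuadraticMap.map_add (quadForm m) x, polar_add_right]
  linear_combination
    (quadForm m b - quadForm m (b + halfSwap c)) * CharTwo.two_eq_zero (R := ZMod 2)

lemma sum_signChar_quadq (m : ℕ) : ∑ x : Fin (2 * m) → ZMod 2, signChar (quadq x) = 2 ^ m := by
  let e := (halves (ZMod 2) m).toEquiv.trans (Equiv.arrowProdEquivProdArrow _ _ _).symm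
  calc ∑ x, signChar (quadq x)
      = ∑ p : Fin m → ZMod 2 × ZMod 2, ∏ k, signChar ((p k).1 * (p k).2) := by
        refine Fintype.sum_equiv e _ _ fun x => ?_
        rw [quadq_eq_dotProduct, dotProduct, AddChar.map_finset_sum]
        rfl
    _ = ∏ k : Fin m, ∑ j : ZMod 2 × ZMod 2, signChar (j.1 * j.2) :=
        (Fintype.prod_sum fun _ (j : ZMod 2 × ZMod 2) => signChar (j.1 * j.2)).symm
    _ = 2 ^ m := by
        rw [show ∑ j : ZMod 2 × ZMod 2, signChar (j.1 * j.2) = 2 by decide]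
        simp

lemma wt_quadq_add_injective {a a' : ZMod 2}
    (h : wt (fun x : Fin (2 * m) → ZMod 2 => quadq x + a) =
      wt fun x : Fin (2 * m) → ZMod 2 => quadq x + a') :
    a = a' := by
  have hne : wt (fun x : Fin (2 * m) → ZMod 2 => quadq x + 1) ≠
      wt fun x : Fin (2 * m) → ZMod 2 => quadq x + 0 := by
    intro heq
    have hsum := sum_signChar_eq_wt_sub_wt (quadq (m := m))
    rw [sum_signChar_quadq, heq] at hsum
    simp only [add_zero, sub_self] at hsum
    exact absurd hsum (by positivity)
  have hcases : ∀ a a' : ZMod 2, a = a' ∨ (a = 1 ∧ a' = 0) ∨ (a = 0 ∧ a' = 1) := by decide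
  obtain rfl | ⟨rfl, rfl⟩ | ⟨rfl, rfl⟩ := hcases a a'
  · rfl
  · exact absurd h hne
  · exact absurd h.symm hne

end StandardQuadratic

theorem quadratic_two_cayley_classes_general {m : ℕ}
    (b c b' c' : Fin (2 * m) → ZMod 2) :
    (fun x => quadq (x + b) + dotp c x + quadq b) 0 = 0 ∧
    (fun x => quadq (x + b') + dotp c' x + quadq b') 0 = 0 ∧
    (Nonempty
        (cayley (fun x => quadq (x + b) + dotp c x + quadq b) ≃g
         cayley (fun x => quadq (x + b') + dotp c' x + quadq b')) ↔
      wt (fun x => quadq (x + b) + dotp c x + quadq b) =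
        wt (fun x => quadq (x + b') + dotp c' x + quadq b')) := by
  rw [quadq_translate_add_dotp b c, quadq_translate_add_dotp b' c']
  have hzero (s : Fin (2 * m) → ZMod 2) :
      (fun x => quadForm m (x + s) + quadForm m s) 0 = 0 := by
    simp [add_self_eq_zero_of_zmod_two]
  refine ⟨hzero _, hzero _, fun ⟨φ⟩ => wt_eq_of_cayley_iso (hzero _) (hzero _) φ, fun hw => ?_⟩
  rw [wt_translate, wt_translate, coe_quadForm] at hw
  exact ⟨cayleyIsoOfMapEq (quadForm m) (wt_quadq_add_injective hw)⟩

/-- within the extended translation class of the quadratic bent function `q`,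
two members have isomorphic Cayley graphs iff they have the same weight; i.e. the ET class
of `q` contains exactly two extended Cayley classes, given by the weight classes. -/
theorem quadratic_two_cayley_classes {m : ℕ} (hm : 1 ≤ m)
    (b c b' c' : Fin (2 * m) → ZMod 2) :
    (fun x => quadq (x + b) + dotp c x + quadq b) 0 = 0 ∧
    (fun x => quadq (x + b') + dotp c' x + quadq b') 0 = 0 ∧
    (Nonempty
        (cayley (fun x => quadq (x + b) + dotp c x + quadq b) ≃g
         cayley (fun x => quadq (x + b') + dotp c' x + quadq b')) ↔
      wt (fun x => quadq (x + b) + dotp c x + quadq b) =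
        wt (fun x => quadq (x + b') + dotp c' x + quadq b')) :=
  quadratic_two_cayley_classes_general b c b' c'
end

section
/- Let f be a bent Boolean function on F_2^{2m} with m ≥ 1, with dual f̂. For b, c ∈ F_2^{2m} let g_{b,c}(x) := f(x+b) + ⟨c,x⟩ + f(b). Then the weight class of g_{b,c} equals f(b) + ⟨c,b⟩ + f̂(c); that is, wt(g_{b,c}) = 2^{2m-1} - 2^{m-1} if f(b) + ⟨c,b⟩ + f̂(c) = 0 and wt(g_{b,c}) = 2^{2m-1} + 2^{m-1} if f(b) + ⟨c,b⟩ + f̂(c) = 1. Hence the weight class matrix of f equals the incidence matrix of the SDP design of f. -/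
/-!
Adding the constant `f b` and the linear function `⟨c, x⟩` to the translate `x ↦ f (x + b)`
only changes the Walsh transform by a sign and a shift of the argument, so
`g = g_{b,c}` has `W_g(0) = (-1)^(f b + ⟨c,b⟩) W_f(c) = (-1)^(f b + ⟨c,b⟩ + f̂ c) 2^m`.
Since `W_g(0) = 2^(2m) - 2 wt(g)`, this sign determines the weight of `g`.
-/

open Finset

theorem neg_one_pow_val_add {R : Type*} [Ring R] (a b : ZMod 2) :
    (-1 : R) ^ (a + b).val = (-1) ^ a.val * (-1) ^ b.val := by
  rw [ZMod.val_add, ← neg_one_pow_eq_pow_mod_two, pow_add]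

theorem neg_one_pow_val_eq_one_sub_two_mul_ite (a : ZMod 2) :
    (-1 : ℤ) ^ a.val = 1 - 2 * if a = 1 then 1 else 0 := by
  fin_cases a <;> rfl

section Walsh

variable {n : ℕ}

theorem dotp_zero_left (y : Fin n → ZMod 2) : dotp 0 y = 0 := by
  simp [dotp]

theorem dotp_add_left (a c y : Fin n → ZMod 2) : dotp (a + c) y = dotp a y + dotp c y := by
  simp [dotp, add_mul, Finset.sum_add_distrib]

theorem dotp_add_right (c x y : Fin n → ZMod 2) : dotp c (x + y) = dotp c x + dotp c y := by
  simp [dotp, mul_add, Finset.sum_add_distrib]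

theorem walsh_zero (g : (Fin n → ZMod 2) → ZMod 2) : walsh g 0 = 2 ^ n - 2 * (wt g : ℤ) := by
  simp only [walsh, dotp_zero_left, add_zero, neg_one_pow_val_eq_one_sub_two_mul_ite,
    Finset.sum_sub_distrib, ← Finset.mul_sum, Finset.sum_boole]
  simp [wt, Finset.card_univ]

theorem walsh_add_const (g : (Fin n → ZMod 2) → ZMod 2) (k : ZMod 2) (a : Fin n → ZMod 2) :
    walsh (fun x => g x + k) a = (-1) ^ k.val * walsh g a := by
  simp only [walsh, Finset.mul_sum, add_right_comm _ k, neg_one_pow_val_add _ k, mul_comm]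

theorem walsh_add_dotp (g : (Fin n → ZMod 2) → ZMod 2) (c a : Fin n → ZMod 2) :
    walsh (fun x => g x + dotp c x) a = walsh g (a + c) := by
  simp only [walsh, dotp_add_left, add_assoc, add_comm (dotp c _)]

theorem walsh_comp_add_right (f : (Fin n → ZMod 2) → ZMod 2) (b c : Fin n → ZMod 2) :
    walsh (fun x => f (x + b)) c = (-1) ^ (dotp c b).val * walsh f c := by
  rw [walsh, walsh, Finset.mul_sum]
  refine Fintype.sum_equiv (Equiv.addRight b) _ _ fun y => ?_
  have hexp : f (y + b) + dotp c y = dotp c b + (f (y + b) + dotp c (y + b)) := by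
    rw [dotp_add_right]
    linear_combination (-dotp c b) * CharTwo.two_eq_zero (R := ZMod 2)
  rw [hexp, neg_one_pow_val_add, Equiv.coe_addRight]

end Walsh

section Bent

variable {m : ℕ}

theorem IsBent.walsh_eq {f : (Fin (2 * m) → ZMod 2) → ZMod 2} (hf : IsBent f)
    (c : Fin (2 * m) → ZMod 2) : walsh f c = (-1) ^ (dual f c).val * 2 ^ m := by
  unfold dual
  split_ifs with h
  · simpa using h
  · have : walsh f c = -2 ^ m := ((abs_eq (by positivity)).mp (hf c)).resolve_left h
    simp [this, ZMod.val_one]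

theorem wt_eq_of_walsh_zero_eq (hm : 1 ≤ m) {g : (Fin (2 * m) → ZMod 2) → ZMod 2}
    (h : walsh g 0 = 2 ^ m) : wt g = 2 ^ (2 * m - 1) - 2 ^ (m - 1) := by
  rw [walsh_zero, ← mul_pow_sub_one (by omega : 2 * m ≠ 0), ← mul_pow_sub_one (by omega : m ≠ 0)]
    at h
  have hle : 2 ^ (m - 1) ≤ 2 ^ (2 * m - 1) := Nat.pow_le_pow_right two_pos (by omega)
  zify [hle]
  linarith

theorem wt_eq_of_walsh_zero_eq_neg (hm : 1 ≤ m) {g : (Fin (2 * m) → ZMod 2) → ZMod 2}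
    (h : walsh g 0 = -2 ^ m) : wt g = 2 ^ (2 * m - 1) + 2 ^ (m - 1) := by
  rw [walsh_zero, ← mul_pow_sub_one (by omega : 2 * m ≠ 0), ← mul_pow_sub_one (by omega : m ≠ 0)]
    at h
  zify
  linarith

theorem wc_eq_of_walsh_zero_eq (hm : 1 ≤ m) {g : (Fin (2 * m) → ZMod 2) → ZMod 2} {s : ZMod 2}
    (h : walsh g 0 = (-1) ^ s.val * 2 ^ m) : wc g = s := by
  obtain rfl | rfl := (by decide : ∀ z : ZMod 2, z = 0 ∨ z = 1) s
  · simp [wc, wt_eq_of_walsh_zero_eq hm (by simpa using h)]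
  · rw [ZMod.val_one] at h
    have hpos : 1 ≤ 2 ^ (m - 1) := Nat.one_le_two_pow
    have hle : 2 ^ (m - 1) ≤ 2 ^ (2 * m - 1) := Nat.pow_le_pow_right two_pos (by omega)
    simp only [wc, wt_eq_of_walsh_zero_eq_neg hm (by simpa using h)]
    exact if_neg (by omega)

end Bent

/-- the weight class of `g_{b,c} x = f (x+b) + ⟨c,x⟩ + f b` equals
`f b + ⟨c,b⟩ + f̂ c`; i.e. the weight class matrix equals the incidence matrix of the SDP
design of `f`. -/
theorem weight_class_matrix_eq_SDP {m : ℕ} (hm : 1 ≤ m)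
    (f : (Fin (2 * m) → ZMod 2) → ZMod 2) (hf : IsBent f)
    (b c : Fin (2 * m) → ZMod 2) :
    wc (fun x => f (x + b) + dotp c x + f b) = f b + dotp c b + dual f c ∧
    (f b + dotp c b + dual f c = 0 →
      wt (fun x => f (x + b) + dotp c x + f b) = 2 ^ (2 * m - 1) - 2 ^ (m - 1)) ∧
    (f b + dotp c b + dual f c = 1 →
      wt (fun x => f (x + b) + dotp c x + f b) = 2 ^ (2 * m - 1) + 2 ^ (m - 1)) := by
  have hW : walsh (fun x => f (x + b) + dotp c x + f b) 0 =
      (-1) ^ (f b + dotp c b + dual f c).val * 2 ^ m := by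
    rw [walsh_add_const, walsh_add_dotp, zero_add, walsh_comp_add_right, hf.walsh_eq,
      neg_one_pow_val_add, neg_one_pow_val_add]
    ring
  refine ⟨wc_eq_of_walsh_zero_eq hm hW, fun hs => ?_, fun hs => ?_⟩
  · exact wt_eq_of_walsh_zero_eq hm (by simpa [hs, ZMod.val_one] using hW)
  · exact wt_eq_of_walsh_zero_eq_neg hm (by simpa [hs, ZMod.val_one] using hW)
end
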